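/- arXiv:math/0602645 — 2 statements merged into one kernel-verified Lean document; each statement's English description precedes it below -/
import Mathlib

section
/- For all positive integers a ≤ b, all integers i with 1 ≤ i ≤ b − a, and all integers k with 1 ≤ k ≤ a, the following binomial sum vanishes: Σ_{j=1}^{b} (−1)^{j−i} · C(a, j−i) · C(b−j, a−k) · C(j−1, k−1) = 0, where C(n,m) denotes the binomial coefficient (with C(n,m)=0 if m<0 or m>n). -/
/-! Substituting `j = i + m`, the sum becomes `∑_{m ≤ a} (-1)^m C(a, m) f(m)` with
`f(m) = C(b - i - m, a - k) C(i - 1 + m, k - 1)`, i.e. `(-1)^a` times the `a`-th forward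
difference of `f` at `0`. Since `m ≤ a ≤ b - i`, `f` agrees on this range with a polynomial of
degree `(a - k) + (k - 1) < a` (up to the factor `(a - k)! (k - 1)!`), and the `a`-th forward
difference of such a polynomial vanishes. -/

open Finset Polynomial
open scoped Nat

theorem Polynomial.sum_range_neg_one_pow_mul_choose_mul_eval_eq_zero {R : Type*} [CommRing R]
    {P : R[X]} {n : ℕ} (hP : P.natDegree < n) :
    ∑ m ∈ range (n + 1), (-1 : R) ^ m * n.choose m * P.eval (m : R) = 0 := by
  have h := congr_fun (fwdDiff_iter_eq_zero_of_degree_lt hP) 0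
  rw [fwdDiff_iter_eq_sum_shift] at h
  calc _ = (-1) ^ n * ∑ m ∈ range (n + 1),
          ((-1 : ℤ) ^ (n - m) * n.choose m) • P.eval (0 + m • 1) := by
        rw [mul_sum]
        refine sum_congr rfl fun m hm => ?_
        obtain ⟨d, rfl⟩ := Nat.exists_eq_add_of_le (mem_range_succ_iff.1 hm)
        have hd : (-1 : R) ^ d * (-1) ^ d = 1 := by rw [← mul_pow]; simp
        simp only [Nat.add_sub_cancel_left, zero_add, nsmul_one, zsmul_eq_mul, pow_add]
        push_cast
        linear_combination -(-1 : R) ^ m * (m + d).choose m * P.eval (m : R) * hd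
    _ = 0 := by rw [h, Pi.zero_apply, mul_zero]

theorem factorial_mul_choose_eq_eval_descPochhammer {R : Type*} [CommRing R] (n r : ℕ) :
    (r ! * n.choose r : R) = (descPochhammer R r).eval (n : R) := by
  rw [descPochhammer_eval_eq_descFactorial, Nat.descFactorial_eq_factorial_mul_choose]
  push_cast; rfl

theorem sum_range_neg_one_pow_mul_choose_mul_choose_sub_mul_choose_add_eq_zero
    {n N c r s : ℕ} (hrs : r + s < n) (hN : n ≤ N) :
    ∑ m ∈ range (n + 1),
      (-1 : ℤ) ^ m * n.choose m * ((N - m).choose r * (c + m).choose s) = 0 := by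
  set P : ℤ[X] :=
    (descPochhammer ℤ r).comp (C (N : ℤ) - X) * (descPochhammer ℤ s).comp (C (c : ℤ) + X)
  have hP : P.natDegree < n := by
    have hN1 : (C (N : ℤ) - X).natDegree ≤ 1 := by compute_degree
    have hc1 : (C (c : ℤ) + X).natDegree ≤ 1 := by compute_degree
    calc P.natDegree
        ≤ r * (C (N : ℤ) - X).natDegree + s * (C (c : ℤ) + X).natDegree := by
          refine natDegree_mul_le.trans (_root_.add_le_add ?_ ?_) <;>
            exact natDegree_comp_le.trans_eq (by rw [descPochhammer_natDegree])
      _ ≤ r * 1 + s * 1 := by gcongr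
      _ < n := by omega
  have heval : ∀ m ∈ range (n + 1),
      P.eval (m : ℤ) = r ! * s ! * ((N - m).choose r * (c + m).choose s) := by
    intro m hm
    have hmN : m ≤ N := (mem_range_succ_iff.1 hm).trans hN
    simp only [P, eval_mul, eval_comp, eval_sub, eval_add, eval_C, eval_X]
    rw [← Nat.cast_sub hmN, ← Nat.cast_add, ← factorial_mul_choose_eq_eval_descPochhammer,
      ← factorial_mul_choose_eq_eval_descPochhammer]
    ring
  have h := P.sum_range_neg_one_pow_mul_choose_mul_eval_eq_zero hP
  rw [sum_congr rfl fun m hm => by rw [heval m hm]] at h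
  refine (mul_eq_zero.1 ?_).resolve_left (by positivity : (r ! * s ! : ℤ) ≠ 0)
  rw [mul_sum, ← h]
  exact sum_congr rfl fun _ _ => by ring

theorem sum_Icc_ite_le_eq_sum_range {M : Type*} [AddCommMonoid M] {g : ℕ → M} {a b i : ℕ}
    (hi : 1 ≤ i) (hb : i + a ≤ b) (hg : ∀ j, i + a < j → g j = 0) :
    ∑ j ∈ Icc 1 b, (if i ≤ j then g j else 0) = ∑ m ∈ range (a + 1), g (i + m) := by
  rw [← sum_filter, ← Nat.add_sub_cancel_left (n := i) (m := a + 1), ← sum_Ico_eq_sum_range]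
  refine (sum_subset (fun j hj => ?_) fun j hj hj' => hg j ?_).symm
  · simp only [mem_Ico, mem_filter, mem_Icc] at hj ⊢; omega
  · simp only [mem_Ico, mem_filter, mem_Icc] at hj hj'; omega

theorem stmt9_general (a b i k : ℕ) (hi : 1 ≤ i)
    (hib : i ≤ b - a) (hk : 1 ≤ k) (hka : k ≤ a) :
    ∑ j ∈ Finset.Icc 1 b,
      (if i ≤ j then
        (-1 : ℤ) ^ (j - i) * (Nat.choose a (j - i)) * (Nat.choose (b - j) (a - k)) *
          (Nat.choose (j - 1) (k - 1))
      else 0) = 0 := by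
  rw [sum_Icc_ite_le_eq_sum_range (a := a) hi (by omega) fun j hj => by
    rw [Nat.choose_eq_zero_of_lt (by omega : a < j - i)]; simp]
  rw [← sum_range_neg_one_pow_mul_choose_mul_choose_sub_mul_choose_add_eq_zero
    (N := b - i) (c := i - 1) (by omega : a - k + (k - 1) < a) (by omega)]
  refine sum_congr rfl fun m _ => ?_
  rw [Nat.add_sub_cancel_left, Nat.sub_sub, (by omega : i + m - 1 = i - 1 + m), mul_assoc]

/-- The vanishing binomial identity expressing `ψ_{a,b} ∘ φ_{a,b} = 0`:
for `1 ≤ a ≤ b`, `1 ≤ i ≤ b - a`, `1 ≤ k ≤ a`,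
`∑_{j=1}^{b} (−1)^{j−i} C(a, j−i) C(b−j, a−k) C(j−1, k−1) = 0`
(terms with `j < i` vanish since `C(a, j−i) = 0` for `j − i < 0`). -/
theorem stmt9 (a b i k : ℕ) (ha : 1 ≤ a) (hab : a ≤ b) (hi : 1 ≤ i)
    (hib : i ≤ b - a) (hk : 1 ≤ k) (hka : k ≤ a) :
    ∑ j ∈ Finset.Icc 1 b,
      (if i ≤ j then
        (-1 : ℤ) ^ (j - i) * (Nat.choose a (j - i)) * (Nat.choose (b - j) (a - k)) *
          (Nat.choose (j - 1) (k - 1))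
      else 0) = 0 :=
  stmt9_general a b i k hi hib hk hka
end

section
/- Let κ be a field, t₀, t₁ ∈ κ with (t₀,t₁) ≠ (0,0). Let W be the 6-dimensional space κ³ ⊕ (κ³)* with the hyperbolic symmetric form β((v,f),(w,g)) = g(v) + f(w). Let e₁,e₂,e₃ be the standard basis of κ³ and x₁,x₂,x₃ the dual basis. Then the three vectors v₁ = t₀²e₁ + t₀t₁e₂ + t₁²x₃, v₂ = t₀e₃ − t₁x₂, v₃ = t₁x₁ − t₀x₂ are linearly independent and span a totally isotropic 3-dimensional subspace of W, which equals its own annihilator with respect to β. -/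
/-!
The three vectors are pairwise `β`-orthogonal, so their span `E` is totally isotropic, and
`(t₀, t₁) ≠ 0` makes them linearly independent. Since `β` is nondegenerate on the
6-dimensional space, `dim E^⊥ = 6 - dim E = 3`, so the inclusion `E ⊆ E^⊥` is an equality.
-/

open Module LinearMap.BilinForm

section Hyperbolic

variable (R : Type*) [CommRing R] (ι : Type*) [Fintype ι]

def hyperbolicForm : LinearMap.BilinForm R ((ι → R) × (ι → R)) :=
  LinearMap.mk₂ R (fun p q => (∑ i, q.2 i * p.1 i) + (∑ i, p.2 i * q.1 i))
    (fun p p' q => by simp only [Prod.fst_add, Prod.snd_add, Pi.add_apply, mul_add, add_mul,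
      Finset.sum_add_distrib]; ring)
    (fun c p q => by simp only [Prod.smul_fst, Prod.smul_snd, Pi.smul_apply, smul_eq_mul,
      Finset.mul_sum, mul_add]; congr 1 <;> exact Finset.sum_congr rfl fun _ _ => by ring)
    (fun p q q' => by simp only [Prod.fst_add, Prod.snd_add, Pi.add_apply, mul_add, add_mul,
      Finset.sum_add_distrib]; ring)
    (fun c p q => by simp only [Prod.smul_fst, Prod.smul_snd, Pi.smul_apply, smul_eq_mul,
      Finset.mul_sum, mul_add]; congr 1 <;> exact Finset.sum_congr rfl fun _ _ => by ring)

variable {R ι}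

@[simp]
theorem hyperbolicForm_apply (p q : (ι → R) × (ι → R)) :
    hyperbolicForm R ι p q = (∑ i, q.2 i * p.1 i) + (∑ i, p.2 i * q.1 i) :=
  rfl

theorem isSymm_hyperbolicForm : LinearMap.IsSymm (hyperbolicForm R ι) :=
  ⟨fun _ _ => add_comm _ _⟩

theorem nondegenerate_hyperbolicForm [DecidableEq ι] : (hyperbolicForm R ι).Nondegenerate := by
  refine isSymm_hyperbolicForm.isRefl.nondegenerate_iff_separatingLeft.mpr fun p hp => ?_
  refine Prod.ext (funext fun i => ?_) (funext fun i => ?_)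
  · simpa [Pi.single_apply] using hp (0, Pi.single i 1)
  · simpa [Pi.single_apply] using hp (Pi.single i 1, 0)

end Hyperbolic

namespace LinearMap.BilinForm

variable {R M : Type*} [CommRing R] [AddCommGroup M] [Module R M]

theorem span_range_le_orthogonal {ι : Type*} {B : LinearMap.BilinForm R M} {f : ι → M}
    (h : ∀ i j, B (f i) (f j) = 0) :
    Submodule.span R (Set.range f) ≤ B.orthogonal (Submodule.span R (Set.range f)) := by
  rw [Submodule.span_le]
  rintro _ ⟨j, rfl⟩ u hu
  suffices Submodule.span R (Set.range f) ≤ LinearMap.ker (B.flip (f j)) from this hu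
  rw [Submodule.span_le]
  rintro _ ⟨i, rfl⟩
  exact h i j

theorem eq_orthogonal_of_le_orthogonal {K V : Type*} [Field K] [AddCommGroup V] [Module K V]
    [FiniteDimensional K V] {B : LinearMap.BilinForm K V} (hB : B.Nondegenerate)
    {W : Submodule K V} (hW : W ≤ B.orthogonal W) (hdim : 2 * finrank K W = finrank K V) :
    W = B.orthogonal W :=
  Submodule.eq_of_le_of_finrank_eq hW (by rw [finrank_orthogonal hB]; omega)

end LinearMap.BilinForm

section Frame

variable {R : Type*} [CommRing R]

def lagrangianFrame (t₀ t₁ : R) : Fin 3 → (Fin 3 → R) × (Fin 3 → R) :=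
  ![(![t₀ ^ 2, t₀ * t₁, 0], ![0, 0, t₁ ^ 2]), (![0, 0, t₀], ![0, -t₁, 0]),
    (![0, 0, 0], ![t₁, -t₀, 0])]

theorem hyperbolicForm_lagrangianFrame (t₀ t₁ : R) (i j : Fin 3) :
    hyperbolicForm R (Fin 3) (lagrangianFrame t₀ t₁ i) (lagrangianFrame t₀ t₁ j) = 0 := by
  fin_cases i <;> fin_cases j <;> simp [lagrangianFrame, Fin.sum_univ_three] <;> ring

theorem eq_zero_of_mul_pow_eq_zero [IsDomain R] {a x y : R} {m n : ℕ}
    (hxy : ¬(x = 0 ∧ y = 0)) (hx : a * x ^ m = 0) (hy : a * y ^ n = 0) : a = 0 := by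
  by_contra ha
  exact hxy ⟨pow_eq_zero_iff'.mp ((mul_eq_zero.mp hx).resolve_left ha) |>.1,
    pow_eq_zero_iff'.mp ((mul_eq_zero.mp hy).resolve_left ha) |>.1⟩

theorem linearIndependent_lagrangianFrame [IsDomain R] {t₀ t₁ : R}
    (h : ¬(t₀ = 0 ∧ t₁ = 0)) : LinearIndependent R (lagrangianFrame t₀ t₁) := by
  rw [Fintype.linearIndependent_iff]
  intro g hg
  have coord (p : (Fin 3 → R) × (Fin 3 → R)) (hp : p = 0) (i : Fin 3) :
      p.1 i = 0 ∧ p.2 i = 0 := by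
    simp [hp]
  obtain ⟨h₁₀, h₂₀⟩ := coord _ hg 0
  obtain ⟨h₁₂, h₂₂⟩ := coord _ hg 2
  obtain ⟨-, h₂₁⟩ := coord _ hg 1
  simp [Fin.sum_univ_three, lagrangianFrame, -mul_eq_zero] at h₁₀ h₂₀ h₁₂ h₂₂ h₂₁
  have hg₀ : g 0 = 0 := eq_zero_of_mul_pow_eq_zero h h₁₀ h₂₂
  have hg₁ : g 1 = 0 := eq_zero_of_mul_pow_eq_zero (m := 1) (n := 2) h (by simpa using h₁₂)
    (by linear_combination -t₁ * h₂₁ - t₀ * h₂₀)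
  have hg₂ : g 2 = 0 := eq_zero_of_mul_pow_eq_zero (m := 2) (n := 1) h
    (by linear_combination -t₀ * h₂₁ - t₁ * h₁₂) (by simpa using h₂₀)
  intro i
  fin_cases i <;> assumption

end Frame

/-- Fiberwise content of the symmetric case of the lemma on `φ'_{3,6}`: in
`W = κ³ ⊕ (κ³)*` (the dual identified with `κ³` via the dual basis) with the hyperbolic
symmetric form `β((v,f),(w,g)) = g(v) + f(w)`, the vectors
`v₁ = t₀²e₁ + t₀t₁e₂ + t₁²x₃`, `v₂ = t₀e₃ − t₁x₂`, `v₃ = t₁x₁ − t₀x₂` are linearly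
independent and span a 3-dimensional totally isotropic subspace equal to its own
annihilator. -/
theorem stmt11 {κ : Type*} [Field κ] (t₀ t₁ : κ) (h : ¬(t₀ = 0 ∧ t₁ = 0)) :
    let β : ((Fin 3 → κ) × (Fin 3 → κ)) → ((Fin 3 → κ) × (Fin 3 → κ)) → κ :=
      fun p q => (∑ i, q.2 i * p.1 i) + (∑ i, p.2 i * q.1 i)
    let v₁ : (Fin 3 → κ) × (Fin 3 → κ) := (![t₀ ^ 2, t₀ * t₁, 0], ![0, 0, t₁ ^ 2])
    let v₂ : (Fin 3 → κ) × (Fin 3 → κ) := (![0, 0, t₀], ![0, -t₁, 0])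
    let v₃ : (Fin 3 → κ) × (Fin 3 → κ) := (![0, 0, 0], ![t₁, -t₀, 0])
    let E : Submodule κ ((Fin 3 → κ) × (Fin 3 → κ)) := Submodule.span κ {v₁, v₂, v₃}
    LinearIndependent κ ![v₁, v₂, v₃] ∧
    Module.finrank κ E = 3 ∧
    (∀ u ∈ E, ∀ w ∈ E, β u w = 0) ∧
    (∀ x : (Fin 3 → κ) × (Fin 3 → κ), x ∈ E ↔ ∀ e ∈ E, β e x = 0) := by
  intro β v₁ v₂ v₃ E
  have hE : E = Submodule.span κ (Set.range (lagrangianFrame t₀ t₁)) := by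
    simp only [E, lagrangianFrame, Matrix.range_cons, Matrix.range_empty, Set.union_empty,
      Set.singleton_union]
    rfl
  have hli : LinearIndependent κ (lagrangianFrame t₀ t₁) := linearIndependent_lagrangianFrame h
  have hiso : E ≤ (hyperbolicForm κ (Fin 3)).orthogonal E :=
    hE ▸ span_range_le_orthogonal (hyperbolicForm_lagrangianFrame t₀ t₁)
  have hdim : finrank κ E = 3 := by
    rw [hE, finrank_span_eq_card hli, Fintype.card_fin]
  have hlag : E = (hyperbolicForm κ (Fin 3)).orthogonal E :=
    eq_orthogonal_of_le_orthogonal nondegenerate_hyperbolicForm hiso (by simp [hdim])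
  exact ⟨hli, hdim, fun u hu w hw => hiso hw u hu, fun x => SetLike.ext_iff.mp hlag x⟩
end
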